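/- arXiv:1703.08273 — 3 statements merged into one kernel-verified Lean document; each statement's English description precedes it below -/
import Mathlib

section
/- Fix real numbers n > 0, N > 0 and c ≥ 0, and define Δ₁(δ) = c + sqrt(2 log(2/δ)/n) and Δ₂(δ) = sqrt((log(2N) + log(1/δ))/(2n)) for δ > 0. Then the ratio Δ₁(δ)/Δ₂(δ) tends to 2 as δ tends to 0 from the right. -/
/-!
Put `t = log (1/δ)`, which tends to `∞` as `δ → 0⁺`. Since `log (2/δ) = log 2 + t`, the
ratio is `c / √B + √(A / B)` with `A = 2 (log 2 + t) / n` and `B = (log (2N) + t) / (2n)`.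
The first term vanishes because `B → ∞`, and `A / B = 4 (log 2 + t) / (log (2N) + t) → 4`,
so the limit is `√4 = 2`: the constants `c`, `log 2`, `log (2N)` are negligible against `t`.
-/

open Filter Real Topology

lemma tendsto_log_one_div_nhdsGT_zero :
    Tendsto (fun δ : ℝ => log (1 / δ)) (𝓝[>] 0) atTop := by
  refine (tendsto_neg_atBot_atTop.comp tendsto_log_nhdsGT_zero).congr fun δ => ?_
  simp [one_div, log_inv]

lemma tendsto_add_div_add_atTop (a b : ℝ) :
    Tendsto (fun t : ℝ => (a + t) / (b + t)) atTop (𝓝 1) := by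
  have hb : Tendsto (fun t : ℝ => b + t) atTop atTop :=
    tendsto_atTop_add_const_left _ _ tendsto_id
  have h : Tendsto (fun t : ℝ => 1 + (a - b) / (b + t)) atTop (𝓝 (1 + 0)) :=
    tendsto_const_nhds.add (tendsto_const_nhds.div_atTop hb)
  rw [add_zero] at h
  refine h.congr' ?_
  filter_upwards [hb.eventually_gt_atTop 0] with t ht
  field_simp
  ring

lemma tendsto_const_add_sqrt_div_sqrt {α : Type*} {l : Filter α} {A B : α → ℝ} {L : ℝ}
    (c : ℝ) (hB : Tendsto B l atTop) (hAB : Tendsto (fun x => A x / B x) l (𝓝 L)) :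
    Tendsto (fun x => (c + √(A x)) / √(B x)) l (𝓝 (√L)) := by
  have h : Tendsto (fun x => c / √(B x) + √(A x / B x)) l (𝓝 (0 + √L)) :=
    (tendsto_const_nhds.div_atTop (tendsto_sqrt_atTop.comp hB)).add hAB.sqrt
  rw [zero_add] at h
  refine h.congr' ?_
  filter_upwards [hB.eventually_ge_atTop 0] with x hx
  rw [add_div, sqrt_div' _ hx]

theorem stmt7_general (n N c : ℝ) (hn : 0 < n) :
    Filter.Tendsto
      (fun δ : ℝ =>
        (c + Real.sqrt (2 * Real.log (2 / δ) / n)) /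
          Real.sqrt ((Real.log (2 * N) + Real.log (1 / δ)) / (2 * n)))
      (nhdsWithin 0 (Set.Ioi 0)) (nhds 2) := by
  have ht := tendsto_log_one_div_nhdsGT_zero
  have hden : Tendsto (fun δ : ℝ => log (2 * N) + log (1 / δ)) (𝓝[>] 0) atTop :=
    tendsto_atTop_add_const_left _ _ ht
  have hlog2 : ∀ᶠ δ : ℝ in 𝓝[>] 0, log (2 / δ) = log 2 + log (1 / δ) :=
    eventually_mem_nhdsWithin.mono fun δ (hδ : 0 < δ) => by
      rw [div_eq_mul_one_div 2 δ, log_mul two_ne_zero (by positivity)]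
  have hratio : Tendsto
      (fun δ : ℝ => 2 * log (2 / δ) / n / ((log (2 * N) + log (1 / δ)) / (2 * n)))
      (𝓝[>] 0) (𝓝 4) := by
    have h := (tendsto_const_nhds (x := (4 : ℝ))).mul
      ((tendsto_add_div_add_atTop (log 2) (log (2 * N))).comp ht)
    rw [mul_one] at h
    refine h.congr' ?_
    filter_upwards [hlog2, hden.eventually_gt_atTop 0] with δ hδ hpos
    rw [Function.comp_apply, hδ]
    field_simp
    ring
  have h4 : √(4 : ℝ) = 2 := by
    rw [show (4 : ℝ) = 2 ^ 2 by norm_num, sqrt_sq zero_le_two]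
  simpa only [h4] using
    tendsto_const_add_sqrt_div_sqrt c (hden.atTop_div_const (by positivity)) hratio

/-- The ratio of the generic Rademacher-average-based bound
`Δ₁(δ) = c + sqrt(2 log(2/δ)/n)` to the union-bound/Hoeffding-based bound
`Δ₂(δ) = sqrt((log(2N) + log(1/δ))/(2n))` tends to `2` as `δ → 0⁺`. -/
theorem stmt7 (n N c : ℝ) (hn : 0 < n) (hN : 0 < N) (hc : 0 ≤ c) :
    Filter.Tendsto
      (fun δ : ℝ =>
        (c + Real.sqrt (2 * Real.log (2 / δ) / n)) /
          Real.sqrt ((Real.log (2 * N) + Real.log (1 / δ)) / (2 * n)))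
      (nhdsWithin 0 (Set.Ioi 0)) (nhds 2) :=
  stmt7_general n N c hn
end

section
/- Let I be a finite set, let τ₁,…,τₙ be fixed transactions (subsets of I), and let σ₁,…,σₙ be independent Rademacher random variables, each uniform on {−1, 1}. Define the conditional Rademacher average R_S = E_σ[ max_{A⊆I} (1/n) Σ_{i=1}^n σᵢ φ_A(τᵢ) ] and, for s > 0, w(s) = (1/s) log Σ_{A⊆I} exp( s² (Σ_{i=1}^n φ_A(τᵢ)²) / (2n²) ), where the sum ranges over all 2^{|I|} subsets A of I. Then R_S ≤ w(s) for every s > 0, and hence R_S ≤ inf_{s>0} w(s). -/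
/-!
For `s > 0`, Jensen's inequality for `exp` gives `exp (s R_S) ≤ E exp (s max_A X_A)`, and the
exponential of a maximum is at most the sum of the exponentials, so
`exp (s R_S) ≤ ∑_A E exp (s X_A)`. Each `X_A = ∑ i, (φ_A(τ i)/n) σ i` is a weighted Rademacher
sum; by independence its moment generating function is `∏ i, cosh (s φ_A(τ i)/n)`, and
`cosh x ≤ exp (x²/2)` bounds it by `exp (s² ∑ i, φ_A(τ i)² / (2n²))`. Taking logarithms gives
`R_S ≤ w(s)`.
-/

open MeasureTheory Finset

/-- Indicator of itemset `A` appearing in transaction `τ`. -/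
noncomputable def phi {I : Type*} [DecidableEq I] (A τ : Finset I) : ℝ :=
  if A ⊆ τ then 1 else 0

/-- The sign `±1` associated to a Boolean coin flip. -/
noncomputable def sign (b : Bool) : ℝ := if b then 1 else -1

/-- The distribution of `n` independent Rademacher variables: the `n`-fold product of the
uniform measure on `{−1, 1}` (encoded by `Bool` via `sign`). -/
noncomputable def radMeasure (n : ℕ) : Measure (Fin n → Bool) :=
  Measure.pi fun _ => (PMF.uniformOfFintype Bool).toMeasure

/-- The conditional Rademacher average
`R_S = E_σ [ max_{A ⊆ I} (1/n) ∑ i, σ i * φ_A (τ i) ]` for a fixed sample `τ`. -/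
noncomputable def radAvg {I : Type*} [Fintype I] [DecidableEq I] {n : ℕ}
    (τ : Fin n → Finset I) : ℝ :=
  ∫ σ : Fin n → Bool,
    (Finset.univ.sup' ⟨∅, Finset.mem_univ ∅⟩
      fun A : Finset I => (∑ i, sign (σ i) * phi A (τ i)) / n) ∂(radMeasure n)

open ProbabilityTheory

lemma exp_mul_sup'_le_sum_exp {α : Type*} (s : Finset α) (hs : s.Nonempty) (f : α → ℝ) (t : ℝ) :
    Real.exp (t * s.sup' hs f) ≤ ∑ a ∈ s, Real.exp (t * f a) := by
  obtain ⟨a, ha, hfa⟩ := s.exists_mem_eq_sup' hs f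
  rw [hfa]
  exact single_le_sum (f := fun a => Real.exp (t * f a)) (fun _ _ => (Real.exp_pos _).le) ha

/-- Massart's finite-class lemma. -/
theorem mul_integral_sup'_le_log_sum_exp {Ω α : Type*} [MeasurableSpace Ω] [Finite Ω]
    [MeasurableSingletonClass Ω] (μ : Measure Ω) [IsProbabilityMeasure μ]
    (s : Finset α) (hs : s.Nonempty) (X : α → Ω → ℝ) (c : α → ℝ) (t : ℝ)
    (hX : ∀ a ∈ s, mgf (X a) μ t ≤ Real.exp (c a)) :
    t * ∫ ω, s.sup' hs (fun a => X a ω) ∂μ ≤ Real.log (∑ a ∈ s, Real.exp (c a)) := by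
  have hpos : 0 < ∑ a ∈ s, Real.exp (c a) := sum_pos (fun _ _ => Real.exp_pos _) hs
  rw [Real.le_log_iff_exp_le hpos, ← integral_const_mul]
  calc Real.exp (∫ ω, t * s.sup' hs (fun a => X a ω) ∂μ)
      ≤ ∫ ω, Real.exp (t * s.sup' hs (fun a => X a ω)) ∂μ :=
        convexOn_exp.map_integral_le Real.continuous_exp.continuousOn isClosed_univ
          (by simp) .of_finite .of_finite
    _ ≤ ∫ ω, ∑ a ∈ s, Real.exp (t * X a ω) ∂μ :=
        integral_mono .of_finite .of_finite fun ω => exp_mul_sup'_le_sum_exp _ hs _ t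
    _ = ∑ a ∈ s, mgf (X a) μ t := integral_finsetSum _ fun _ _ => .of_finite
    _ ≤ ∑ a ∈ s, Real.exp (c a) := sum_le_sum hX

instance isProbabilityMeasure_radMeasure (n : ℕ) : IsProbabilityMeasure (radMeasure n) := by
  unfold radMeasure; infer_instance

lemma integral_exp_mul_sign (a : ℝ) :
    ∫ b, Real.exp (a * sign b) ∂(PMF.uniformOfFintype Bool).toMeasure = Real.cosh a := by
  have hhalf (b : Bool) : (PMF.uniformOfFintype Bool).toMeasure.real {b} = 1 / 2 := by
    simp [measureReal_def]
  rw [integral_fintype .of_finite, Fintype.sum_bool, hhalf, hhalf, Real.cosh_eq]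
  simp only [sign, if_true, Bool.false_eq_true, if_false, smul_eq_mul, mul_one, mul_neg]
  ring

lemma mgf_sum_mul_sign_eq_prod_cosh {n : ℕ} (a : Fin n → ℝ) (t : ℝ) :
    mgf (fun σ => ∑ i, a i * sign (σ i)) (radMeasure n) t = ∏ i, Real.cosh (t * a i) := by
  simp_rw [← integral_exp_mul_sign, mgf, mul_sum, Real.exp_sum, ← mul_assoc]
  exact integral_fintype_prod_eq_prod (fun i b => Real.exp (t * a i * sign b))

lemma mgf_sum_mul_sign_le {n : ℕ} (a : Fin n → ℝ) (t : ℝ) :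
    mgf (fun σ => ∑ i, a i * sign (σ i)) (radMeasure n) t ≤
      Real.exp (t ^ 2 * (∑ i, a i ^ 2) / 2) := by
  rw [mgf_sum_mul_sign_eq_prod_cosh, mul_sum, sum_div, Real.exp_sum]
  gcongr with i
  rw [← mul_pow]
  exact Real.cosh_le_exp_half_sq _

theorem radAvg_le_one_div_mul_log_sum_exp {I : Type*} [Fintype I] [DecidableEq I] {n : ℕ}
    (τ : Fin n → Finset I) {s : ℝ} (hs : 0 < s) :
    radAvg τ ≤ (1 / s) * Real.log (∑ A : Finset I,
      Real.exp (s ^ 2 * (∑ i, phi A (τ i) ^ 2) / (2 * n ^ 2))) := by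
  rw [one_div, ← div_eq_inv_mul, le_div_iff₀' hs]
  refine mul_integral_sup'_le_log_sum_exp _ _ _ _ _ s fun A _ => ?_
  have hX : (fun σ : Fin n → Bool => (∑ i, sign (σ i) * phi A (τ i)) / n) =
      fun σ => ∑ i, phi A (τ i) / n * sign (σ i) := by
    ext σ
    rw [sum_div]
    exact sum_congr rfl fun i _ => by ring
  rw [hX]
  convert mgf_sum_mul_sign_le (fun i => phi A (τ i) / n) s using 2
  simp only [div_pow, ← sum_div]
  ring

theorem stmt10_general {I : Type*} [Fintype I] [DecidableEq I] (n : ℕ)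
    (τ : Fin n → Finset I) :
    (∀ s : ℝ, 0 < s → radAvg τ ≤
      (1 / s) * Real.log (∑ A : Finset I,
        Real.exp (s ^ 2 * (∑ i, phi A (τ i) ^ 2) / (2 * n ^ 2)))) ∧
    radAvg τ ≤ ⨅ s : Set.Ioi (0 : ℝ),
      (1 / (s : ℝ)) * Real.log (∑ A : Finset I,
        Real.exp ((s : ℝ) ^ 2 * (∑ i, phi A (τ i) ^ 2) / (2 * n ^ 2))) := by
  have : Nonempty (Set.Ioi (0 : ℝ)) := Set.nonempty_Ioi.to_subtype
  exact ⟨fun _ hs => radAvg_le_one_div_mul_log_sum_exp τ hs,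
    le_ciInf fun s => radAvg_le_one_div_mul_log_sum_exp τ s.2⟩

/-- Riondato–Upfal's Theorem 3, revised: for every `s > 0`,
`R_S ≤ w(s) = (1/s) log ∑_{A ⊆ I} exp(s² (∑ i, φ_A(τ i)²) / (2n²))`,
where the sum ranges over all `2^|I|` itemsets; hence `R_S ≤ inf_{s > 0} w(s)`. -/
theorem stmt10 {I : Type*} [Fintype I] [DecidableEq I] (n : ℕ) (hn : 0 < n)
    (τ : Fin n → Finset I) :
    (∀ s : ℝ, 0 < s → radAvg τ ≤
      (1 / s) * Real.log (∑ A : Finset I,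
        Real.exp (s ^ 2 * (∑ i, phi A (τ i) ^ 2) / (2 * n ^ 2)))) ∧
    radAvg τ ≤ ⨅ s : Set.Ioi (0 : ℝ),
      (1 / (s : ℝ)) * Real.log (∑ A : Finset I,
        Real.exp ((s : ℝ) ^ 2 * (∑ i, phi A (τ i) ^ 2) / (2 * n ^ 2))) :=
  stmt10_general n τ
end

section
/- Let Ob be a nonempty finite collection of itemsets (subsets of I), let m be a fixed real number, and let τ₁,…,τₙ be i.i.d. random transactions each distributed uniformly on the finite nonempty dataset D. Then the probability that there exists A ∈ Ob whose true frequency f_D(A) and sampled frequency f_S(A) lie strictly on opposite sides of m (i.e., f_D(A) < m < f_S(A) or f_S(A) < m < f_D(A)) is at most Σ_{A∈Ob} exp(−2n (f_D(A) − m)²). -/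
open MeasureTheory Finset

/-- True frequency of itemset `A` in the dataset `D` (a finite nonempty family of
transactions, with multiplicities, indexed by `Fin m`). -/
noncomputable def trueFreq {I : Type*} [DecidableEq I] {m : ℕ} (D : Fin m → Finset I)
    (A : Finset I) : ℝ :=
  (∑ j, phi A (D j)) / m

/-- Sampled frequency of itemset `A` for the sample of transactions `D (ω 1), …, D (ω n)`. -/
noncomputable def sampFreq {I : Type*} [DecidableEq I] {m n : ℕ} (D : Fin m → Finset I)
    (A : Finset I) (ω : Fin n → Fin m) : ℝ :=
  (∑ i, phi A (D (ω i))) / n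

/-- The distribution of `n` i.i.d. samples, each uniform on the dataset indices `Fin m`:
the `n`-fold product of the uniform probability measure. -/
noncomputable def sampleMeasure (m n : ℕ) [NeZero m] : Measure (Fin n → Fin m) :=
  Measure.pi fun _ => (PMF.uniformOfFintype (Fin m)).toMeasure

/-!
The sum `∑ᵢ (φ_A(τᵢ) - f_D(A)) = n (f_S(A) - f_D(A))` is a sum of `n` independent centred
variables with values in an interval of length one, so by Hoeffding's lemma it is sub-Gaussian
with variance proxy `n / 4`. A crossing of `mid` forces this sum (or its negative) to be at least
`n |f_D(A) - mid|`, which the sub-Gaussian tail bounds by `exp (-2 n (f_D(A) - mid)²)`; a union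
bound over `Ob` finishes the proof.
-/

open ProbabilityTheory Real

section SubgaussianTail

variable {Ω : Type*} {mΩ : MeasurableSpace Ω} {μ : Measure Ω} [IsFiniteMeasure μ]

lemma ProbabilityTheory.HasSubgaussianMGF.measure_ge_natCast_mul_le {Y : Ω → ℝ} {n : ℕ}
    (h : HasSubgaussianMGF Y (n / 4) μ) {δ : ℝ} (hδ : 0 ≤ δ) :
    μ {ω | n * δ ≤ Y ω} ≤ ENNReal.ofReal (exp (-2 * n * δ ^ 2)) := by
  rw [← ofReal_measureReal]
  refine ENNReal.ofReal_le_ofReal ((h.measure_ge_le (by positivity)).trans_eq ?_)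
  rcases n.eq_zero_or_pos with rfl | hn
  · simp
  · push_cast
    field_simp
    ring_nf

end SubgaussianTail

instance {m n : ℕ} [NeZero m] : IsProbabilityMeasure (sampleMeasure m n) := by
  unfold sampleMeasure; infer_instance

section Sampling

variable {I : Type*} [DecidableEq I]

lemma phi_mem_Icc (A τ : Finset I) : phi A τ ∈ Set.Icc (0 : ℝ) 1 := by
  unfold phi
  split_ifs <;> simp

lemma integral_phi_sampleMeasure {m n : ℕ} [NeZero m] (D : Fin m → Finset I) (A : Finset I)
    (i : Fin n) : ∫ ω, phi A (D (ω i)) ∂sampleMeasure m n = trueFreq D A := by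
  rw [sampleMeasure, integral_comp_eval (X := fun _ ↦ Fin m) (f := fun j ↦ phi A (D j))
    Measurable.of_discrete.aestronglyMeasurable]
  simp [PMF.integral_eq_sum, trueFreq, div_eq_inv_mul, mul_sum]

lemma hasSubgaussianMGF_sum_phi_sub_trueFreq {m n : ℕ} [NeZero m] (D : Fin m → Finset I)
    (A : Finset I) :
    HasSubgaussianMGF (fun ω ↦ ∑ i, (phi A (D (ω i)) - trueFreq D A)) (n / 4)
      (sampleMeasure m n) := by
  have hindep : iIndepFun (fun i ω ↦ phi A (D (ω i)) - trueFreq D A) (sampleMeasure m n) :=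
    iIndepFun_pi (X := fun _ j ↦ phi A (D j) - trueFreq D A)
      fun _ ↦ Measurable.of_discrete.aemeasurable
  have hoeffding_lemma (i : Fin n) : HasSubgaussianMGF (fun ω ↦ phi A (D (ω i)) - trueFreq D A)
      ((‖(1 : ℝ) - 0‖₊ / 2) ^ 2) (sampleMeasure m n) := by
    have := hasSubgaussianMGF_of_mem_Icc (μ := sampleMeasure m n)
      (X := fun ω : Fin n → Fin m ↦ phi A (D (ω i))) Measurable.of_discrete.aemeasurable
      (ae_of_all _ fun ω ↦ phi_mem_Icc A (D (ω i)))
    rwa [integral_phi_sampleMeasure] at this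
  convert HasSubgaussianMGF.sum_of_iIndepFun hindep (s := univ) fun i _ ↦ hoeffding_lemma i
    using 1
  norm_num [div_eq_mul_inv]

lemma sum_phi_sub_trueFreq {m n : ℕ} (hn : 0 < n) (D : Fin m → Finset I) (A : Finset I)
    (ω : Fin n → Fin m) :
    ∑ i, (phi A (D (ω i)) - trueFreq D A) = n * (sampFreq D A ω - trueFreq D A) := by
  rw [sum_sub_distrib, sampFreq, sum_const, card_univ, Fintype.card_fin, nsmul_eq_mul]
  field_simp

def crossingEvent {m n : ℕ} (D : Fin m → Finset I) (A : Finset I) (mid : ℝ) :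
    Set (Fin n → Fin m) :=
  {ω | (trueFreq D A < mid ∧ mid < sampFreq D A ω) ∨
    (sampFreq D A ω < mid ∧ mid < trueFreq D A)}

lemma sampleMeasure_crossingEvent_le {m n : ℕ} [NeZero m] (hn : 0 < n) (D : Fin m → Finset I)
    (A : Finset I) (mid : ℝ) :
    sampleMeasure m n (crossingEvent D A mid)
      ≤ ENNReal.ofReal (exp (-2 * n * (trueFreq D A - mid) ^ 2)) := by
  have hY := hasSubgaussianMGF_sum_phi_sub_trueFreq (n := n) D A
  simp_rw [sum_phi_sub_trueFreq hn] at hY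
  have hn' : (0 : ℝ) < n := Nat.cast_pos.2 hn
  rcases le_total (trueFreq D A) mid with hle | hge
  · calc _ ≤ sampleMeasure m n
            {ω | n * (mid - trueFreq D A) ≤ n * (sampFreq D A ω - trueFreq D A)} := by
          refine measure_mono fun ω hω ↦ ?_
          rcases hω with ⟨-, hS⟩ | ⟨-, hS⟩
          · exact mul_le_mul_of_nonneg_left (by linarith) hn'.le
          · linarith
      _ ≤ ENNReal.ofReal (exp (-2 * n * (mid - trueFreq D A) ^ 2)) :=
          hY.measure_ge_natCast_mul_le (sub_nonneg.2 hle)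
      _ = _ := by rw [← neg_sub, neg_sq]
  · calc _ ≤ sampleMeasure m n
            {ω | n * (trueFreq D A - mid) ≤ -(n * (sampFreq D A ω - trueFreq D A))} := by
          refine measure_mono fun ω hω ↦ ?_
          rcases hω with ⟨hS, -⟩ | ⟨hS, -⟩
          · linarith
          · rw [Set.mem_ofPred_eq, ← mul_neg, neg_sub]
            exact mul_le_mul_of_nonneg_left (by linarith) hn'.le
      _ ≤ ENNReal.ofReal (exp (-2 * n * (trueFreq D A - mid) ^ 2)) :=
          hY.neg.measure_ge_natCast_mul_le (sub_nonneg.2 hge)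

end Sampling

theorem stmt12_general {I : Type*} [DecidableEq I] (Ob : Finset (Finset I))
    (m n : ℕ) [NeZero m] (hn : 0 < n)
    (D : Fin m → Finset I) (mid : ℝ) :
    sampleMeasure m n {ω | ∃ A ∈ Ob,
        (trueFreq D A < mid ∧ mid < sampFreq D A ω) ∨
        (sampFreq D A ω < mid ∧ mid < trueFreq D A)}
      ≤ ENNReal.ofReal (∑ A ∈ Ob, Real.exp (-2 * n * (trueFreq D A - mid) ^ 2)) := by
  calc _ ≤ sampleMeasure m n (⋃ A ∈ Ob, crossingEvent D A mid) :=
        measure_mono fun _ hω ↦ by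
          obtain ⟨A, hA, hcross⟩ := hω
          exact Set.mem_biUnion hA hcross
    _ ≤ ∑ A ∈ Ob, sampleMeasure m n (crossingEvent D A mid) := measure_biUnion_finset_le _ _
    _ ≤ ∑ A ∈ Ob, ENNReal.ofReal (exp (-2 * n * (trueFreq D A - mid) ^ 2)) :=
        sum_le_sum fun A _ ↦ sampleMeasure_crossingEvent_le hn D A mid
    _ = _ := (ENNReal.ofReal_sum_of_nonneg fun _ _ ↦ (exp_pos _).le).symm

theorem stmt12 {I : Type*} [DecidableEq I] (Ob : Finset (Finset I)) (hOb : Ob.Nonempty)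
    (m n : ℕ) [NeZero m] (hn : 0 < n)
    (D : Fin m → Finset I) (mid : ℝ) :
    sampleMeasure m n {ω | ∃ A ∈ Ob,
        (trueFreq D A < mid ∧ mid < sampFreq D A ω) ∨
        (sampFreq D A ω < mid ∧ mid < trueFreq D A)}
      ≤ ENNReal.ofReal (∑ A ∈ Ob, Real.exp (-2 * n * (trueFreq D A - mid) ^ 2)) :=
  stmt12_general Ob m n hn D mid
end
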